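/- For d ∈ ℝⁿ with positive entries summing to 1, the fractional volume satisfies the inclusion-exclusion formula: for all τ ∈ (0,1), v(τ,d) = vol{z ∈ [0,1]ⁿ : z·d ≤ τ} = (1/(n!·∏_k d_k)) · Σ_{A ⊆ {1,…,n}} (−1)^{|A|} · max(0, τ − Σ_{k∈A} d_k)ⁿ. -/

import Mathlib

/-!
Since `∑_{A ⊆ B} (-1)^|A|` is `1` for `B = ∅` and `0` otherwise, the indicator of
`{z ∈ [0,1)ⁿ : z ⬝ d ≤ τ}` is the alternating sum over `A` of the indicators of
`{z ≥ 0 : z ⬝ d ≤ τ, z_k ≥ 1 for k ∈ A}`. That set is the translate, by the `0/1` vertex `e_A`,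
of the corner simplex `{x ≥ 0 : x ⬝ d ≤ τ - ∑_{k ∈ A} d_k}`, whose volume
`(τ - ∑_{k ∈ A} d_k)ⁿ / (n! ∏ d_k)` comes from slicing off one coordinate at a time and a diagonal
change of variables. Replacing `[0,1]ⁿ` by `[0,1)ⁿ` only changes a null set.
-/

open Finset MeasureTheory

section InclusionExclusion

variable {α ι : Type*} [Fintype ι]

theorem Set.indicator_inter_iInter_compl_eq_sum {R : Type*} [Ring R] (U : Set α)
    (F : ι → Set α) (z : α) :
    (U ∩ ⋂ k, (F k)ᶜ).indicator 1 z =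
      ∑ A : Finset ι, (-1 : R) ^ A.card * (U ∩ ⋂ k ∈ A, F k).indicator 1 z := by
  classical
  by_cases hz : z ∈ U
  swap
  · simp [hz]
  set B : Finset ι := {k | z ∈ F k}
  calc (U ∩ ⋂ k, (F k)ᶜ).indicator 1 z = ((if B = ∅ then 1 else 0 : ℤ) : R) := by
        simp [Set.indicator_apply, hz, B, Finset.eq_empty_iff_forall_notMem]
    _ = ∑ A ∈ B.powerset, (-1 : R) ^ A.card := by
        rw [← Finset.sum_powerset_neg_one_pow_card]; push_cast; rfl
    _ = _ := by
        rw [← Finset.univ_inter B.powerset, ← Finset.sum_ite_mem]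
        refine Finset.sum_congr rfl fun A _ => ?_
        simp [Set.indicator_apply, hz, B, Finset.subset_iff]

theorem MeasureTheory.measureReal_inter_iInter_compl_eq_sum [MeasurableSpace α] (μ : Measure α)
    {U : Set α} (hU : MeasurableSet U) (hμU : μ U ≠ ⊤) {F : ι → Set α}
    (hF : ∀ k, MeasurableSet (F k)) :
    μ.real (U ∩ ⋂ k, (F k)ᶜ) = ∑ A : Finset ι, (-1 : ℝ) ^ A.card * μ.real (U ∩ ⋂ k ∈ A, F k) := by
  have hmeas (A : Finset ι) : MeasurableSet (U ∩ ⋂ k ∈ A, F k) :=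
    hU.inter (A.measurableSet_biInter fun k _ => hF k)
  have hint (A : Finset ι) : Integrable ((U ∩ ⋂ k ∈ A, F k).indicator 1) μ :=
    (integrable_indicator_iff (hmeas A)).2
      (integrableOn_const (C := (1 : ℝ)) (measure_ne_top_of_subset Set.inter_subset_left hμU))
  rw [← integral_indicator_one (hU.inter (.iInter fun k => (hF k).compl))]
  simp_rw [Set.indicator_inter_iInter_compl_eq_sum (R := ℝ) U F]
  rw [integral_finsetSum _ fun A _ => (hint A).const_mul _]
  simp_rw [integral_const_mul, integral_indicator_one (hmeas _)]

end InclusionExclusion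

section CubeVertex

variable {ι : Type*}

noncomputable def cubeVertex (A : Finset ι) : ι → ℝ := (A : Set ι).indicator 1

theorem cubeVertex_of_mem {A : Finset ι} {k : ι} (hk : k ∈ A) : cubeVertex A k = 1 :=
  Set.indicator_of_mem (Finset.mem_coe.2 hk) _

theorem cubeVertex_of_notMem {A : Finset ι} {k : ι} (hk : k ∉ A) : cubeVertex A k = 0 :=
  Set.indicator_of_notMem (mt Finset.mem_coe.1 hk) _

theorem cubeVertex_nonneg (A : Finset ι) (k : ι) : 0 ≤ cubeVertex A k :=
  Set.indicator_nonneg (fun _ _ => zero_le_one) k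

theorem cubeVertex_le_iff {A : Finset ι} {z : ι → ℝ} :
    cubeVertex A ≤ z ↔ 0 ≤ z ∧ ∀ k ∈ A, 1 ≤ z k := by
  refine ⟨fun h => ⟨fun k => (cubeVertex_nonneg A k).trans (h k),
    fun k hk => cubeVertex_of_mem hk ▸ h k⟩, fun ⟨h0, h1⟩ k => ?_⟩
  by_cases hk : k ∈ A
  · simpa [cubeVertex_of_mem hk] using h1 k hk
  · simpa [cubeVertex_of_notMem hk] using h0 k

theorem sum_cubeVertex_mul [Fintype ι] (A : Finset ι) (d : ι → ℝ) :
    ∑ k, cubeVertex A k * d k = ∑ k ∈ A, d k := by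
  classical
  simp [cubeVertex, Set.indicator_apply, Finset.sum_ite_mem]

end CubeVertex

section CornerSimplex

variable {ι : Type*} [Fintype ι]

def cornerSimplex (d : ι → ℝ) (t : ℝ) : Set (ι → ℝ) := {x | 0 ≤ x ∧ ∑ k, x k * d k ≤ t}

theorem measurableSet_cornerSimplex (d : ι → ℝ) (t : ℝ) : MeasurableSet (cornerSimplex d t) :=
  (measurableSet_le measurable_const measurable_id).inter
    (measurableSet_le (by fun_prop : Measurable fun x : ι → ℝ => ∑ k, x k * d k) measurable_const)

theorem cornerSimplex_eq_empty {d : ι → ℝ} (hd : 0 ≤ d) {t : ℝ} (ht : t < 0) :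
    cornerSimplex d t = ∅ := by
  refine Set.eq_empty_of_forall_notMem fun x ⟨hx, hxt⟩ => ht.not_ge (hxt.trans' ?_)
  exact Finset.sum_nonneg fun k _ => mul_nonneg (hx k) (hd k)

open scoped Pointwise in
theorem cornerSimplex_inter_biInter_one_le (d : ι → ℝ) (t : ℝ) (A : Finset ι) :
    cornerSimplex d t ∩ ⋂ k ∈ A, {z | 1 ≤ z k} =
      cubeVertex A +ᵥ cornerSimplex d (t - ∑ k ∈ A, d k) := by
  ext z
  have hsum : ∑ k, (-cubeVertex A + z) k * d k = ∑ k, z k * d k - ∑ k ∈ A, d k := by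
    simp only [Pi.add_apply, Pi.neg_apply, add_mul, neg_mul, sum_add_distrib, sum_neg_distrib,
      sum_cubeVertex_mul]
    ring
  rw [Set.mem_vadd_set_iff_neg_vadd_mem, vadd_eq_add]
  simp only [cornerSimplex, Set.mem_inter_iff, Set.mem_iInter, Set.mem_ofPred_eq, hsum,
    sub_le_sub_iff_right, le_neg_add_iff_le, cubeVertex_le_iff]
  tauto

theorem cornerSimplex_inter_iInter_lt_one_ae_eq (d : ι → ℝ) (t : ℝ) :
    (cornerSimplex d t ∩ ⋂ k, {z | 1 ≤ z k}ᶜ : Set (ι → ℝ)) =ᵐ[volume]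
      {z : ι → ℝ | z ∈ Set.Icc 0 1 ∧ ∑ k, z k * d k ≤ t} := by
  have hcube : cornerSimplex d t ∩ ⋂ k, {z | 1 ≤ z k}ᶜ =
      Set.pi Set.univ (fun _ => Set.Ico (0 : ℝ) 1) ∩ {z | ∑ k, z k * d k ≤ t} := by
    ext z
    simp only [cornerSimplex, Pi.le_def, Pi.zero_apply, Set.mem_inter_iff, Set.mem_ofPred_eq,
      Set.mem_iInter, Set.mem_compl_iff, not_le, Set.mem_pi, Set.mem_univ, Set.mem_Ico,
      forall_const, forall_and]
    tauto
  rw [hcube, volume_pi]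
  exact Measure.univ_pi_Ico_ae_eq_Icc.inter Filter.EventuallyEq.rfl

end CornerSimplex

theorem lintegral_Icc_sub_pow_div_factorial (n : ℕ) {t : ℝ} (ht : 0 ≤ t) :
    ∫⁻ a in Set.Icc 0 t, ENNReal.ofReal ((t - a) ^ n / n.factorial) =
      ENNReal.ofReal (t ^ (n + 1) / (n + 1).factorial) := by
  rw [← ofReal_integral_eq_lintegral_ofReal (by fun_prop : Continuous _).integrableOn_Icc
    ((ae_restrict_iff' measurableSet_Icc).2 (ae_of_all _ fun a ha => by
      have : 0 ≤ t - a := sub_nonneg.2 ha.2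
      positivity)),
    integral_Icc_eq_integral_Ioc, ← intervalIntegral.integral_of_le ht,
    intervalIntegral.integral_div, intervalIntegral.integral_comp_sub_left (· ^ n) t, sub_self, sub_zero, integral_pow,
    zero_pow n.succ_ne_zero, sub_zero, Nat.factorial_succ]
  push_cast
  field_simp

theorem piFinSuccAbove_preimage_cornerSimplex (n : ℕ) (t : ℝ) :
    MeasurableEquiv.piFinSuccAbove (fun _ => ℝ) 0 ⁻¹'
        {p : ℝ × (Fin n → ℝ) | 0 ≤ p.1 ∧ p.2 ∈ cornerSimplex 1 (t - p.1)} =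
      cornerSimplex 1 t := by
  ext x
  simp only [cornerSimplex, Set.mem_preimage, Set.mem_ofPred_eq,
    MeasurableEquiv.piFinSuccAbove_apply, Pi.one_apply, mul_one, Pi.le_def]
  rw [Fin.forall_fin_succ, Fin.sum_univ_succ, le_sub_iff_add_le']
  simp [Fin.tail, and_assoc]

theorem volume_cornerSimplex_one (n : ℕ) {t : ℝ} (ht : 0 ≤ t) :
    volume (cornerSimplex (1 : Fin n → ℝ) t) = ENNReal.ofReal (t ^ n / n.factorial) := by
  induction n generalizing t with
  | zero =>
    have : cornerSimplex (1 : Fin 0 → ℝ) t = Set.univ := by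
      ext x; simp [cornerSimplex, ht, Subsingleton.elim x 0]
    simp [this, volume_pi]
  | succ n ih =>
    set P : Set (ℝ × (Fin n → ℝ)) := {p | 0 ≤ p.1 ∧ p.2 ∈ cornerSimplex 1 (t - p.1)}
    have hP : MeasurableSet P :=
      (measurableSet_le measurable_const measurable_fst).inter
        ((measurableSet_le measurable_const measurable_snd).inter
          (measurableSet_le (f := fun p : ℝ × (Fin n → ℝ) => ∑ k, p.2 k * 1)
            (g := fun p => t - p.1) (by fun_prop) (by fun_prop)))
    have hslice (a : ℝ) : volume (Prod.mk a ⁻¹' P) =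
        (Set.Icc 0 t).indicator (fun a => ENNReal.ofReal ((t - a) ^ n / n.factorial)) a := by
      by_cases ha : a ∈ Set.Icc 0 t
      · have : Prod.mk a ⁻¹' P = cornerSimplex 1 (t - a) := by
          ext y; simp [P, ha.1]
        rw [this, ih (sub_nonneg.2 ha.2), Set.indicator_of_mem ha]
      · have : Prod.mk a ⁻¹' P = ∅ := by
          refine Set.eq_empty_of_forall_notMem fun y ⟨ha0, hy⟩ => ?_
          have hta : t - a < 0 := sub_neg.2 (not_le.1 fun hat => ha ⟨ha0, hat⟩)
          rwa [cornerSimplex_eq_empty zero_le_one hta] at hy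
        rw [this, Set.indicator_of_notMem ha, measure_empty]
    rw [← piFinSuccAbove_preimage_cornerSimplex,
      (volume_preserving_piFinSuccAbove (fun _ => ℝ) 0).measure_preimage hP.nullMeasurableSet,
      Measure.volume_eq_prod, Measure.prod_apply hP]
    simp_rw [hslice]
    rw [lintegral_indicator measurableSet_Icc, lintegral_Icc_sub_pow_div_factorial n ht]

theorem volume_cornerSimplex {n : ℕ} {d : Fin n → ℝ} (hd : ∀ k, 0 < d k) {t : ℝ} (ht : 0 ≤ t) :
    volume (cornerSimplex d t) = ENNReal.ofReal (t ^ n / (n.factorial * ∏ k, d k)) := by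
  set f : (Fin n → ℝ) →ₗ[ℝ] Fin n → ℝ := Matrix.toLin' (Matrix.diagonal d)
  have hdet : LinearMap.det f = ∏ k, d k := by
    rw [LinearMap.det_toLin', Matrix.det_diagonal]
  have hpos : 0 < ∏ k, d k := Finset.prod_pos fun k _ => hd k
  have hpre : f ⁻¹' cornerSimplex 1 t = cornerSimplex d t := by
    ext x
    simp [f, cornerSimplex, Pi.le_def, Matrix.mulVec_diagonal, mul_comm,
      mul_nonneg_iff_of_pos_left (hd _)]
  rw [← hpre, Measure.addHaar_preimage_linearMap _ (hdet ▸ hpos.ne'), hdet,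
    volume_cornerSimplex_one n ht, abs_inv, abs_of_pos hpos,
    ← ENNReal.ofReal_mul (by positivity)]
  congr 1
  field_simp

theorem measureReal_cornerSimplex_inter_biInter_one_le {n : ℕ} {d : Fin n → ℝ}
    (hd : ∀ k, 0 < d k) {t : ℝ} (ht : 0 ≤ t) (A : Finset (Fin n)) :
    volume.real (cornerSimplex d t ∩ ⋂ k ∈ A, {z | 1 ≤ z k}) =
      max 0 (t - ∑ k ∈ A, d k) ^ n / (n.factorial * ∏ k, d k) := by
  rw [cornerSimplex_inter_biInter_one_le, measureReal_def, measure_vadd]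
  rcases le_or_gt 0 (t - ∑ k ∈ A, d k) with hA | hA
  · have hpos : 0 < ∏ k, d k := Finset.prod_pos fun k _ => hd k
    rw [volume_cornerSimplex hd hA, max_eq_right hA, ENNReal.toReal_ofReal (by positivity)]
  · -- `0 ^ 0 = 1`: the empty case needs `n ≠ 0`, true since `A` is nonempty when `t ≥ 0`.
    obtain ⟨k, -⟩ : A.Nonempty := by
      by_contra hempty
      rw [Finset.not_nonempty_iff_eq_empty.1 hempty, sum_empty, sub_zero] at hA
      linarith
    rw [cornerSimplex_eq_empty (fun k => (hd k).le) hA, max_eq_left hA.le, zero_pow k.pos.ne']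
    simp

theorem stmt_10_general (n : ℕ) (d : Fin n → ℝ) (hd : ∀ k, 0 < d k)
    (τ : ℝ) (hτ : τ ∈ Set.Ioo (0 : ℝ) 1) :
    (volume {z : Fin n → ℝ | z ∈ Set.Icc (0 : Fin n → ℝ) 1 ∧ ∑ k, z k * d k ≤ τ}).toReal =
      (1 / (n.factorial * ∏ k, d k)) *
        ∑ A : Finset (Fin n), (-1 : ℝ) ^ A.card * max 0 (τ - ∑ k ∈ A, d k) ^ n := by
  have hτ₀ : 0 ≤ τ := hτ.1.le
  rw [← measure_congr (cornerSimplex_inter_iInter_lt_one_ae_eq d τ), ← measureReal_def,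
    measureReal_inter_iInter_compl_eq_sum volume (measurableSet_cornerSimplex d τ)
      (volume_cornerSimplex hd hτ₀ ▸ ENNReal.ofReal_ne_top)
      (fun k => measurableSet_le measurable_const (measurable_pi_apply k)),
    Finset.mul_sum]
  refine Finset.sum_congr rfl fun A _ => ?_
  rw [measureReal_cornerSimplex_inter_biInter_one_le hd hτ₀]
  ring

theorem stmt_10 (n : ℕ) (d : Fin n → ℝ) (hd : ∀ k, 0 < d k) (hsum : ∑ k, d k = 1)
    (τ : ℝ) (hτ : τ ∈ Set.Ioo (0 : ℝ) 1) :
    (volume {z : Fin n → ℝ | z ∈ Set.Icc (0 : Fin n → ℝ) 1 ∧ ∑ k, z k * d k ≤ τ}).toReal =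
      (1 / (n.factorial * ∏ k, d k)) *
        ∑ A : Finset (Fin n), (-1 : ℝ) ^ A.card * max 0 (τ - ∑ k ∈ A, d k) ^ n :=
  stmt_10_general n d hd τ hτ
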